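/- arXiv:2503.05662 — 3 statements merged into one kernel-verified Lean document; each statement's English description precedes it below -/
import Mathlib

section
/- Let 1 < β < β' < K be reals and t > 0. Suppose nonnegative reals x_1, ..., x_K satisfy, for every i ∈ [K], x_i > (β'−β)t/(K−β') + (β'/(K−β'))·Σ_{j<i} x_j. Then for every i ∈ [K], x_i > ((β'−β)t/K)·exp(β'·i/K). -/
/-!
Write `c = (β' - β) t / (K - β')` and `r = β' / (K - β')`. If `x_i > c + r ∑_{j<i} x_j` for all
`i ≤ n`, then by induction `c ((1 + r)^n - 1) ≤ r ∑_{j ≤ n} x_j`, so `x_i > c (1 + r)^(i-1)`: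
the partial sums grow geometrically. Since `1 + r = 1 / (1 - β'/K) ≥ exp (β'/K)`, the geometric
bound dominates the exponential one.
-/

open Finset

section GeometricGrowth

variable {c r : ℝ} {x : ℕ → ℝ} {n : ℕ}

theorem mul_one_add_pow_sub_one_le_mul_sum (hr : 0 ≤ r)
    (hx : ∀ i, 1 ≤ i → i ≤ n → c + r * ∑ j ∈ Ico 1 i, x j < x i) :
    c * ((1 + r) ^ n - 1) ≤ r * ∑ j ∈ Ico 1 (n + 1), x j := by
  induction n with
  | zero => simp
  | succ n ih =>
    have hprev := ih fun i hi hin => hx i hi (by omega)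
    have hlast := hx (n + 1) (by omega) le_rfl
    rw [sum_Ico_succ_top (by omega), pow_succ]
    nlinarith [mul_le_mul_of_nonneg_left hprev (by linarith : (0 : ℝ) ≤ 1 + r),
      mul_le_mul_of_nonneg_left hlast.le hr]

theorem mul_one_add_pow_lt_of_lt_add_mul_sum (hr : 0 ≤ r)
    (hx : ∀ i, 1 ≤ i → i ≤ n → c + r * ∑ j ∈ Ico 1 i, x j < x i) {i : ℕ} (hi : i + 1 ≤ n) :
    c * (1 + r) ^ i < x (i + 1) := by
  have hsum := mul_one_add_pow_sub_one_le_mul_sum (n := i) hr fun k hk hki => hx k hk (by omega)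
  linarith [hx (i + 1) (by omega) hi]

end GeometricGrowth

/-- Stability technical lemma: if `x_i > (β'-β)t/(K-β') + (β'/(K-β')) ∑_{j<i} x_j`
for all `i ∈ [K]`, then `x_i > ((β'-β)t/K) exp(β' i / K)`. -/
theorem stability_technical (K : ℕ) (β β' t : ℝ)
    (hβ : 1 < β) (hββ' : β < β') (hβ'K : β' < K) (ht : 0 < t)
    (x : ℕ → ℝ)
    (hx : ∀ i, 1 ≤ i → i ≤ K →
      (β' - β) * t / (K - β') + β' / (K - β') * ∑ j ∈ Finset.Ico 1 i, x j < x i) :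
    ∀ i, 1 ≤ i → i ≤ K →
      (β' - β) * t / K * Real.exp (β' * i / K) < x i := by
  have hKβ' : (0 : ℝ) < K - β' := by linarith
  have hK : (0 : ℝ) < K := by linarith
  have hr : 0 ≤ β' / (K - β') := div_nonneg (by linarith) hKβ'.le
  have hexp : Real.exp (β' / K) ≤ 1 + β' / (K - β') := by
    calc Real.exp (β' / K) ≤ 1 / (1 - β' / K) :=
          Real.exp_bound_div_one_sub_of_interval (div_nonneg (by linarith) hK.le) ((div_lt_one hK).2 hβ'K)
      _ = 1 + β' / (K - β') := by field_simp; ring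
  rintro _ hi hiK
  obtain ⟨j, rfl⟩ := Nat.exists_eq_add_of_le' hi
  calc (β' - β) * t / K * Real.exp (β' * ↑(j + 1) / K)
      = (β' - β) * t / K * Real.exp (β' / K) ^ (j + 1) := by
        rw [← Real.exp_nat_mul]; ring_nf
    _ ≤ (β' - β) * t / K * (1 + β' / (K - β')) ^ (j + 1) := by
        gcongr
    _ = (β' - β) * t / (K - β') * (1 + β' / (K - β')) ^ j := by
        rw [pow_succ]; field_simp; ring
    _ < x (j + 1) := mul_one_add_pow_lt_of_lt_add_mul_sum hr hx hiK
end

section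
/- Let f : (0,1] → ℝ be L-Lipschitz. Let a_i, a_j, b, c_i, c_j be reals with 1 ≤ a_i, a_j, 0 < b, 0 ≤ c_i, c_j ≤ A, and (a_i + s)/(b + A·s + c_i), (a_j + s)/(b + A·s + c_j) ∈ (0,1] for all s in a range. Then for any m ≥ 1, |(1/m)·Σ_{ℓ=1}^{m} [ f((a_i + ℓ−1)/(b + A(ℓ−1) + c_i)) − f((a_j + ℓ−1)/(b + A(ℓ−1) + c_j)) ]| ≤ (L(A + |a_i − a_j|)/m)·Σ_{ℓ=1}^{m} 1/(b + A(ℓ−1)). -/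
open Finset

theorem abs_div_add_sub_div_add_le {p q D c c' A : ℝ} (hD : 0 < D)
    (hc : c ∈ Set.Icc 0 A) (hc' : c' ∈ Set.Icc 0 A) (hq : |q / (D + c')| ≤ 1) :
    |p / (D + c) - q / (D + c')| ≤ (A + |p - q|) / D := by
  obtain ⟨hc0, hcA⟩ := hc
  obtain ⟨hc'0, hc'A⟩ := hc'
  have hDc : 0 < D + c := by linarith
  have hDc' : 0 < D + c' := by linarith
  have hsplit : p / (D + c) - q / (D + c')
      = (p - q) / (D + c) + q / (D + c') * ((c' - c) / (D + c)) := by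
    field_simp
    ring
  have hpq : |(p - q) / (D + c)| ≤ |p - q| / D := by
    rw [abs_div, abs_of_pos hDc]
    exact div_le_div_of_nonneg_left (abs_nonneg _) hD (by linarith)
  have hcc : |(c' - c) / (D + c)| ≤ A / D := by
    rw [abs_div, abs_of_pos hDc]
    exact div_le_div₀ (hc0.trans hcA) (abs_sub_le_iff.mpr ⟨by linarith, by linarith⟩) hD
      (by linarith)
  calc |p / (D + c) - q / (D + c')|
      ≤ |(p - q) / (D + c)| + |q / (D + c')| * |(c' - c) / (D + c)| := by
        rw [hsplit, ← abs_mul]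
        exact abs_add_le _ _
    _ ≤ |p - q| / D + 1 * (A / D) := by
        gcongr
    _ = (A + |p - q|) / D := by ring

theorem abs_sum_sub_le_of_lipschitz {ι : Type*} (s : Finset ι) {S : Set ℝ} {f : ℝ → ℝ} {L : ℝ}
    (hL : 0 ≤ L) (hf : ∀ x ∈ S, ∀ y ∈ S, |f x - f y| ≤ L * |x - y|)
    {x y g : ι → ℝ} (hx : ∀ i ∈ s, x i ∈ S) (hy : ∀ i ∈ s, y i ∈ S)
    (hxy : ∀ i ∈ s, |x i - y i| ≤ g i) :
    |∑ i ∈ s, (f (x i) - f (y i))| ≤ L * ∑ i ∈ s, g i := by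
  rw [mul_sum]
  refine (abs_sum_le_sum_abs _ _).trans (sum_le_sum fun i hi => ?_)
  exact (hf _ (hx i hi) _ (hy i hi)).trans (mul_le_mul_of_nonneg_left (hxy i hi) hL)

theorem elimination_bias_error_bound_general
    (f : ℝ → ℝ) (L : ℝ) (hL : 0 ≤ L)
    (hf : ∀ x ∈ Set.Ioc (0 : ℝ) 1, ∀ y ∈ Set.Ioc (0 : ℝ) 1, |f x - f y| ≤ L * |x - y|)
    (A : ℝ)
    (ai aj b ci cj : ℝ) (hb : 0 < b)
    (hci : ci ∈ Set.Icc (0 : ℝ) A) (hcj : cj ∈ Set.Icc (0 : ℝ) A)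
    (m : ℕ)
    (hfraci : ∀ ℓ ∈ Finset.range m,
      (ai + ℓ) / (b + A * ℓ + ci) ∈ Set.Ioc (0 : ℝ) 1)
    (hfracj : ∀ ℓ ∈ Finset.range m,
      (aj + ℓ) / (b + A * ℓ + cj) ∈ Set.Ioc (0 : ℝ) 1) :
    |(1 / m : ℝ) * ∑ ℓ ∈ Finset.range m,
        (f ((ai + ℓ) / (b + A * ℓ + ci)) - f ((aj + ℓ) / (b + A * ℓ + cj)))|
      ≤ L * (A + |ai - aj|) / m * ∑ ℓ ∈ Finset.range m, 1 / (b + A * ℓ) := by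
  have hA : 0 ≤ A := hci.1.trans hci.2
  have hfrac_diff : ∀ ℓ ∈ range m,
      |(ai + ℓ) / (b + A * ℓ + ci) - (aj + ℓ) / (b + A * ℓ + cj)|
        ≤ (A + |ai - aj|) * (1 / (b + A * ℓ)) := by
    intro ℓ hℓ
    have hfracj_le : |(aj + ℓ) / (b + A * ℓ + cj)| ≤ 1 :=
      abs_le.mpr ⟨by linarith [(hfracj ℓ hℓ).1], (hfracj ℓ hℓ).2⟩
    have h := abs_div_add_sub_div_add_le (p := ai + ℓ) (by positivity) hci hcj hfracj_le
    rwa [add_sub_add_right_eq_sub, div_eq_mul_one_div (A + _)] at h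
  rw [abs_mul, abs_of_nonneg (by positivity)]
  calc 1 / (m : ℝ) * |∑ ℓ ∈ range m,
        (f ((ai + ℓ) / (b + A * ℓ + ci)) - f ((aj + ℓ) / (b + A * ℓ + cj)))|
      ≤ 1 / m * (L * ∑ ℓ ∈ range m, (A + |ai - aj|) * (1 / (b + A * ℓ))) := by
        gcongr
        exact abs_sum_sub_le_of_lipschitz _ hL hf hfraci hfracj hfrac_diff
    _ = L * (A + |ai - aj|) / m * ∑ ℓ ∈ range m, 1 / (b + A * ℓ) := by
        rw [← mul_sum]
        ring

/-- Bias-error bound for the elimination algorithm: the averaged difference of the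
Lipschitz bias function applied to the two arms' play fractions is controlled by
`(L (A + |a_i - a_j|)/m) ∑_ℓ 1/(b + A ℓ)`. -/
theorem elimination_bias_error_bound
    (f : ℝ → ℝ) (L : ℝ) (hL : 0 ≤ L)
    (hf : ∀ x ∈ Set.Ioc (0 : ℝ) 1, ∀ y ∈ Set.Ioc (0 : ℝ) 1, |f x - f y| ≤ L * |x - y|)
    (A : ℝ) (hA : 1 ≤ A)
    (ai aj b ci cj : ℝ) (hai : 1 ≤ ai) (haj : 1 ≤ aj) (hb : 0 < b)
    (hci : ci ∈ Set.Icc (0 : ℝ) A) (hcj : cj ∈ Set.Icc (0 : ℝ) A)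
    (m : ℕ) (hm : 1 ≤ m)
    (hfraci : ∀ ℓ ∈ Finset.range m,
      (ai + ℓ) / (b + A * ℓ + ci) ∈ Set.Ioc (0 : ℝ) 1)
    (hfracj : ∀ ℓ ∈ Finset.range m,
      (aj + ℓ) / (b + A * ℓ + cj) ∈ Set.Ioc (0 : ℝ) 1) :
    |(1 / m : ℝ) * ∑ ℓ ∈ Finset.range m,
        (f ((ai + ℓ) / (b + A * ℓ + ci)) - f ((aj + ℓ) / (b + A * ℓ + cj)))|
      ≤ L * (A + |ai - aj|) / m * ∑ ℓ ∈ Finset.range m, 1 / (b + A * ℓ) :=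
  elimination_bias_error_bound_general f L hL hf A ai aj b ci cj hb hci hcj m hfraci hfracj
end

section
/- Let f : [0,1] → [0,1] be nondecreasing. Suppose T⁰_i ≥ 1 for each i ∈ [K], t⁰ = Σ_i T⁰_i, and consider fractions of the form (T⁰_i + P + s)/(t⁰ + Q + K·s + b) where P, Q, s ≥ 0 are reals with Q ≤ K·P and 0 ≤ b ≤ K−1. Then this fraction is at least min{ T⁰_i/(t⁰ + b), 1/K } ≥ T⁰_min/(t⁰ + K − 1), and consequently f applied to the fraction is at least f(T⁰_min/(t⁰ + K − 1)). -/
open Finset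

/-! The fraction is a mediant of `T⁰_i / (t⁰ + b)` and `(P + s) / (Q + K s)`, and the second
of these is at least `1 / K` because `Q ≤ K P`; so the fraction dominates the minimum of the two.
That minimum is in turn at least `T⁰_min / (t⁰ + K - 1)`, since `b ≤ K - 1` and
`K T⁰_min ≤ t⁰`. Both bounds lie in `[0, 1]`, where `f` is monotone. -/

theorem Fintype.card_mul_iInf_le_sum {ι : Type*} [Fintype ι] (f : ι → ℝ) :
    Fintype.card ι * ⨅ i, f i ≤ ∑ i, f i := by
  simpa using univ.card_nsmul_le_sum f _
    fun i _ ↦ ciInf_le (Set.finite_range f).bddBelow i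

theorem le_add_div_add_of_mul_le {α : Type*} [Field α] [LinearOrder α] [IsStrictOrderedRing α]
    {a b c d x : α} (hcd : 0 < c + d) (ha : x * c ≤ a) (hb : x * d ≤ b) :
    x ≤ (a + b) / (c + d) := by
  rw [le_div_iff₀ hcd]
  linarith

section PlayFraction

variable {k T t P Q s b : ℝ}

theorem min_le_play_fraction (hk : 0 < k) (htb : 0 < t + b) (hQ : 0 ≤ Q) (hs : 0 ≤ s)
    (hQP : Q ≤ k * P) :
    min (T / (t + b)) (1 / k) ≤ (T + P + s) / (t + Q + k * s + b) := by
  have hd : 0 ≤ Q + k * s := by positivity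
  have hplayed : min (T / (t + b)) (1 / k) * (Q + k * s) ≤ P + s :=
    calc min (T / (t + b)) (1 / k) * (Q + k * s)
        ≤ 1 / k * (Q + k * s) := mul_le_mul_of_nonneg_right (min_le_right _ _) hd
      _ ≤ P + s := by
        rw [one_div, inv_mul_le_iff₀ hk]
        linarith
  have hinit : min (T / (t + b)) (1 / k) * (t + b) ≤ T :=
    (le_div_iff₀ htb).mp (min_le_left _ _)
  calc min (T / (t + b)) (1 / k)
      ≤ (T + (P + s)) / ((t + b) + (Q + k * s)) :=
        le_add_div_add_of_mul_le (by linarith) hinit hplayed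
    _ = (T + P + s) / (t + Q + k * s + b) := by ring_nf

theorem div_le_min_play_fraction {τ : ℝ} (hτ : 0 ≤ τ) (hτT : τ ≤ T)
    (hkτ : k * τ ≤ t) (htb : 0 < t + b) (hb0 : 0 ≤ b) (hb : b ≤ k - 1) :
    τ / (t + k - 1) ≤ min (T / (t + b)) (1 / k) := by
  have hk : 0 < k := by linarith
  have htk : 0 < t + k - 1 := by linarith
  refine le_min (div_le_div₀ (hτ.trans hτT) hτT htb (by linarith)) ?_
  rw [div_le_div_iff₀ htk hk]
  linarith

end PlayFraction

theorem elimination_fraction_lower_bound_general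
    (K : ℕ) (T0 : Fin K → ℕ) (hT0 : ∀ i, 1 ≤ T0 i) (i : Fin K)
    (P Q s b : ℝ) (hQ : 0 ≤ Q) (hs : 0 ≤ s)
    (hQP : Q ≤ K * P) (hb0 : 0 ≤ b) (hb : b ≤ (K : ℝ) - 1)
    (f : ℝ → ℝ) (hmono : MonotoneOn f (Set.Icc (0 : ℝ) 1))
    (hfrac_le_one :
      ((T0 i : ℝ) + P + s) / ((∑ j, T0 j : ℕ) + Q + K * s + b) ≤ 1) :
    min ((T0 i : ℝ) / ((∑ j, T0 j : ℕ) + b)) (1 / K)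
        ≤ ((T0 i : ℝ) + P + s) / ((∑ j, T0 j : ℕ) + Q + K * s + b) ∧
      ((⨅ j, (T0 j : ℝ)) / ((∑ j, T0 j : ℕ) + K - 1)
        ≤ min ((T0 i : ℝ) / ((∑ j, T0 j : ℕ) + b)) (1 / K)) ∧
      f ((⨅ j, (T0 j : ℝ)) / ((∑ j, T0 j : ℕ) + K - 1))
        ≤ f (((T0 i : ℝ) + P + s) / ((∑ j, T0 j : ℕ) + Q + K * s + b)) := by
  have hK : (0 : ℝ) < K := by linarith
  have hτ : 0 ≤ ⨅ j, (T0 j : ℝ) := Real.iInf_nonneg fun j ↦ Nat.cast_nonneg _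
  have hτT : ⨅ j, (T0 j : ℝ) ≤ T0 i := ciInf_le (Set.finite_range _).bddBelow i
  have hKτ : K * ⨅ j, (T0 j : ℝ) ≤ (∑ j, T0 j : ℕ) := by
    simpa using Fintype.card_mul_iInf_le_sum fun j ↦ (T0 j : ℝ)
  have hTt : (T0 i : ℝ) ≤ (∑ j, T0 j : ℕ) := by
    exact_mod_cast single_le_sum (fun j _ ↦ Nat.zero_le (T0 j)) (mem_univ i)
  have htb : (0 : ℝ) < (∑ j, T0 j : ℕ) + b := by
    have : (1 : ℝ) ≤ T0 i := by exact_mod_cast hT0 i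
    linarith
  have hfrac := min_le_play_fraction (T := T0 i) hK htb hQ hs hQP
  have hmin := div_le_min_play_fraction hτ hτT hKτ htb hb0 hb
  have hx0 : 0 ≤ (⨅ j, (T0 j : ℝ)) / ((∑ j, T0 j : ℕ) + K - 1) := by
    refine div_nonneg hτ ?_
    linarith
  have hx1 : (⨅ j, (T0 j : ℝ)) / ((∑ j, T0 j : ℕ) + K - 1) ≤ 1 :=
    (hmin.trans (min_le_right _ _)).trans (div_le_one_of_le₀ (by linarith) hK.le)
  exact ⟨hfrac, hmin,
    hmono ⟨hx0, hx1⟩ ⟨hx0.trans (hmin.trans hfrac), hfrac_le_one⟩ (hmin.trans hfrac)⟩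

/-- Lower bound on the play fraction of the phased elimination algorithm, and its
consequence for a nondecreasing bias function `f : [0,1] → [0,1]`. -/
theorem elimination_fraction_lower_bound
    (K : ℕ) (hK : 0 < K) (T0 : Fin K → ℕ) (hT0 : ∀ i, 1 ≤ T0 i) (i : Fin K)
    (P Q s b : ℝ) (hP : 0 ≤ P) (hQ : 0 ≤ Q) (hs : 0 ≤ s)
    (hQP : Q ≤ K * P) (hb0 : 0 ≤ b) (hb : b ≤ (K : ℝ) - 1)
    (f : ℝ → ℝ) (hmono : MonotoneOn f (Set.Icc (0 : ℝ) 1))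
    (hrange : ∀ x ∈ Set.Icc (0 : ℝ) 1, f x ∈ Set.Icc (0 : ℝ) 1)
    (hfrac_le_one :
      ((T0 i : ℝ) + P + s) / ((∑ j, T0 j : ℕ) + Q + K * s + b) ≤ 1) :
    min ((T0 i : ℝ) / ((∑ j, T0 j : ℕ) + b)) (1 / K)
        ≤ ((T0 i : ℝ) + P + s) / ((∑ j, T0 j : ℕ) + Q + K * s + b) ∧
      ((⨅ j, (T0 j : ℝ)) / ((∑ j, T0 j : ℕ) + K - 1)
        ≤ min ((T0 i : ℝ) / ((∑ j, T0 j : ℕ) + b)) (1 / K)) ∧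
      f ((⨅ j, (T0 j : ℝ)) / ((∑ j, T0 j : ℕ) + K - 1))
        ≤ f (((T0 i : ℝ) + P + s) / ((∑ j, T0 j : ℕ) + Q + K * s + b)) :=
  elimination_fraction_lower_bound_general K T0 hT0 i P Q s b hQ hs hQP hb0 hb f hmono hfrac_le_one
end
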